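/- Let f̂ : ℕ^s → ℂ be absolutely summable and define f(x) = Σ_{l ∈ ℕ^s} f̂(l) wal_l(x) for x ∈ [0,1)^s. Then for every k ∈ ℕ^s, the discrete Walsh coefficient over the digital net satisfies f̃(k) = p^{−m} Σ_{n=0}^{p^m−1} f(x_n) conj(wal_k(x_n)) = Σ_{l ∈ D(C)} f̂(k ⊕ l) = f̂(k) + Σ_{l ∈ D(C), l ≠ 0} f̂(k ⊕ l). -/

import Mathlib

open scoped BigOperators

/-- `ω_p = exp(2πi/p)`. -/
noncomputable def omega (p : ℕ) : ℂ := Complex.exp (2 * Real.pi * Complex.I / p)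

/-- The `i`-th base-`p` digit of the natural number `n` (starting from `i = 0`). -/
def ndigit (p n i : ℕ) : ℕ := (n / p ^ i) % p

/-- The `i`-th base-`p` digit of the real number `x` (starting from `i = 1`):
`x_i = ⌊p^i x⌋ mod p`. -/
noncomputable def xdigit (p : ℕ) (x : ℝ) (i : ℕ) : ℕ := (⌊(p : ℝ) ^ i * x⌋).toNat % p

/-- The base-`p` Walsh function `wal_k(x) = ω_p^{x_1 k_0 + x_2 k_1 + ⋯}`
(the digits of `k` vanish beyond index `k`, so the sum below is the full series). -/
noncomputable def wal (p k : ℕ) (x : ℝ) : ℂ :=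
  omega p ^ (∑ i ∈ Finset.range (k + 1), xdigit p x (i + 1) * ndigit p k i)

/-- Multivariate Walsh function `wal_k(x) = ∏_j wal_{k_j}(x_j)`. -/
noncomputable def walS (p s : ℕ) (k : Fin s → ℕ) (x : Fin s → ℝ) : ℂ :=
  ∏ j, wal p (k j) (x j)

/-- The vector of the first `m` base-`p` digits of `n`, viewed in `ℤ_p^m`. -/
def nvec (p m : ℕ) (n : ℕ) : Fin m → ZMod p := fun i => (ndigit p n i : ZMod p)

/-- The `n`-th point of the digital net generated by matrices `C = (C_1,…,C_s)`:
`x_{j,n} = Σ_{i=1}^m y_{j,n,i} p^{-i}` where `y⃗_{j,n} = C_j n⃗`. -/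
noncomputable def netPoint (p s m : ℕ) (C : Fin s → Matrix (Fin m) (Fin m) (ZMod p)) (n : ℕ) :
    Fin s → ℝ :=
  fun j => ∑ i : Fin m, ((Matrix.mulVec (C j) (nvec p m n)) i).val / (p : ℝ) ^ (i.val + 1)

/-- `C·k = C_1ᵀ k⃗_1^{(m)} + ⋯ + C_sᵀ k⃗_s^{(m)} ∈ ℤ_p^m`. -/
def Cdot (p s m : ℕ) (C : Fin s → Matrix (Fin m) (Fin m) (ZMod p)) (k : Fin s → ℕ) :
    Fin m → ZMod p :=
  ∑ j, Matrix.mulVec (Matrix.transpose (C j)) (nvec p m (k j))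

/-- Digitwise addition modulo `p` of base-`p` digits: `k ⊕ l`. -/
def dadd (p k l : ℕ) : ℕ :=
  ∑ i ∈ Finset.range (k + l + 1), ((ndigit p k i + ndigit p l i) % p) * p ^ i

/-- Digitwise subtraction modulo `p` of base-`p` digits: `k ⊖ l`. -/
def dsub (p k l : ℕ) : ℕ :=
  ∑ i ∈ Finset.range (k + l + 1), ((ndigit p k i + (p - ndigit p l i)) % p) * p ^ i

/-! On the net, every Walsh function is an additive character of `ℤ_p^m`: writing `ψ` for the
standard character of `ZMod p`, `wal_l(x_n) = ψ((C·l) ⬝ n⃗)`, because the digits of `x_{j,n}` are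
the entries of `C_j n⃗` and `⟨l⃗_j, C_j n⃗⟩ = ⟨C_jᵀ l⃗_j, n⃗⟩`. Orthogonality of characters over
`ℤ_p^m` then makes the net average of `wal_l · conj wal_k` the indicator of `C·l = C·k`.
Absolute summability lets the average pass through the Walsh series of `f`, and since
`C·(k ⊕ l) = C·k + C·l`, the shift `l ↦ k ⊕ l` maps the dual net `D(C)` onto `{l | C·l = C·k}`. -/

open Finset

section Digits

variable {p : ℕ}

lemma ndigit_lt [NeZero p] (n i : ℕ) : ndigit p n i < p :=
  Nat.mod_lt _ (NeZero.pos p)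

lemma ndigit_eq_zero_of_lt_pow {n i : ℕ} (h : n < p ^ i) : ndigit p n i = 0 := by
  rw [ndigit, Nat.div_eq_of_lt h, Nat.zero_mod]

@[simp] lemma ndigit_zero (i : ℕ) : ndigit p 0 i = 0 := by
  simp [ndigit]

lemma ndigit_eq_zero_of_lt [Fact (1 < p)] {n i : ℕ} (h : n < i) : ndigit p n i = 0 :=
  ndigit_eq_zero_of_lt_pow <| h.trans <| Nat.lt_pow_self Fact.out

lemma ndigit_finFunctionFinEquiv {N : ℕ} (f : Fin N → Fin p) (i : Fin N) :
    ndigit p (finFunctionFinEquiv f) i = f i := by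
  rw [ndigit, ← finFunctionFinEquiv_symm_apply_val, Equiv.symm_apply_apply]

lemma ndigit_sum_range {d : ℕ → ℕ} (hd : ∀ i, d i < p) (N i : ℕ) :
    ndigit p (∑ j ∈ range N, d j * p ^ j) i = if i < N then d i else 0 := by
  let f : Fin N → Fin p := fun j => ⟨d j, hd j⟩
  have hf : (finFunctionFinEquiv f : ℕ) = ∑ j ∈ range N, d j * p ^ j := by
    rw [finFunctionFinEquiv_apply]
    exact Fin.sum_univ_eq_sum_range (fun j => d j * p ^ j) N
  rw [← hf]
  split_ifs with hi
  · exact ndigit_finFunctionFinEquiv f ⟨i, hi⟩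
  · refine ndigit_eq_zero_of_lt_pow ((finFunctionFinEquiv f).is_lt.trans_le ?_)
    exact Nat.pow_le_pow_right ((Nat.zero_le _).trans_lt (hd 0)) (not_lt.1 hi)

lemma eq_of_ndigit_eq [Fact (1 < p)] {a b : ℕ} (h : ∀ i, ndigit p a i = ndigit p b i) :
    a = b := by
  have hp : 1 < p := Fact.out
  have hlt : ∀ c ≤ a + b, c < p ^ (a + b) := fun c hc =>
    (Nat.lt_pow_self hp).trans_le (Nat.pow_le_pow_right (by omega) hc)
  have ha := hlt a (by omega)
  have hb := hlt b (by omega)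
  have key : finFunctionFinEquiv.symm (⟨a, ha⟩ : Fin (p ^ (a + b))) =
      finFunctionFinEquiv.symm ⟨b, hb⟩ :=
    funext fun i => Fin.ext <| by simpa only [finFunctionFinEquiv_symm_apply_val, ndigit] using h i
  exact congrArg Fin.val (finFunctionFinEquiv.symm.injective key)

lemma ndigit_dadd [Fact (1 < p)] (k l i : ℕ) :
    ndigit p (dadd p k l) i = (ndigit p k i + ndigit p l i) % p := by
  rw [dadd, ndigit_sum_range (fun _ => Nat.mod_lt _ (NeZero.pos p))]
  split_ifs with hi
  · rfl
  · rw [ndigit_eq_zero_of_lt (by omega : k < i), ndigit_eq_zero_of_lt (by omega : l < i)]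
    rfl

lemma ndigit_dsub [Fact (1 < p)] (k l i : ℕ) :
    ndigit p (dsub p k l) i = (ndigit p k i + (p - ndigit p l i)) % p := by
  rw [dsub, ndigit_sum_range (fun _ => Nat.mod_lt _ (NeZero.pos p))]
  split_ifs with hi
  · rfl
  · rw [ndigit_eq_zero_of_lt (by omega : k < i), ndigit_eq_zero_of_lt (by omega : l < i)]
    simp

lemma dadd_zero_right [Fact (1 < p)] (k : ℕ) : dadd p k 0 = k :=
  eq_of_ndigit_eq fun i => by
    rw [ndigit_dadd, ndigit_zero, add_zero, Nat.mod_eq_of_lt (ndigit_lt k i)]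

lemma dsub_dadd [Fact (1 < p)] (k l : ℕ) : dsub p (dadd p k l) k = l :=
  eq_of_ndigit_eq fun i => by
    have := ndigit_lt (p := p) k i
    have := ndigit_lt (p := p) l i
    rw [ndigit_dsub, ndigit_dadd, Nat.mod_add_mod,
      show ndigit p k i + ndigit p l i + (p - ndigit p k i) = ndigit p l i + p by omega,
      Nat.add_mod_right, Nat.mod_eq_of_lt (ndigit_lt l i)]

lemma dadd_dsub [Fact (1 < p)] (k l : ℕ) : dadd p k (dsub p l k) = l :=
  eq_of_ndigit_eq fun i => by
    have := ndigit_lt (p := p) k i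
    have := ndigit_lt (p := p) l i
    rw [ndigit_dadd, ndigit_dsub, Nat.add_mod_mod,
      show ndigit p k i + (ndigit p l i + (p - ndigit p k i)) = ndigit p l i + p by omega,
      Nat.add_mod_right, Nat.mod_eq_of_lt (ndigit_lt l i)]

def daddEquiv (p : ℕ) [Fact (1 < p)] (k : ℕ) : ℕ ≃ ℕ where
  toFun := dadd p k
  invFun l := dsub p l k
  left_inv := dsub_dadd k
  right_inv := dadd_dsub k

end Digits

section DualNet

variable {p s m : ℕ}

lemma nvec_dadd [Fact (1 < p)] (a b : ℕ) : nvec p m (dadd p a b) = nvec p m a + nvec p m b := by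
  ext i
  simp only [nvec, ndigit_dadd, ZMod.natCast_mod, Nat.cast_add, Pi.add_apply]

lemma Cdot_dadd [Fact (1 < p)] (C : Fin s → Matrix (Fin m) (Fin m) (ZMod p)) (k l : Fin s → ℕ) :
    Cdot p s m C (fun j => dadd p (k j) (l j)) = Cdot p s m C k + Cdot p s m C l := by
  simp only [Cdot, nvec_dadd, Matrix.mulVec_add, sum_add_distrib]

lemma Cdot_zero (C : Fin s → Matrix (Fin m) (Fin m) (ZMod p)) : Cdot p s m C 0 = 0 := by
  have : nvec p m 0 = 0 := funext fun i => by simp [nvec]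
  simp [Cdot, this]

end DualNet

namespace AddChar

lemma map_sum_eq_prod {ι A M : Type*} [AddCommMonoid A] [CommMonoid M] (ψ : AddChar A M)
    (s : Finset ι) (a : ι → A) : ψ (∑ i ∈ s, a i) = ∏ i ∈ s, ψ (a i) := by
  classical
  induction s using Finset.induction_on with
  | empty => simp
  | insert i s hi ih => rw [sum_insert hi, prod_insert hi, map_add_eq_mul, ih]

lemma sum_dotProduct_eq_ite {R R' ι : Type*} [CommRing R] [Fintype R] [DecidableEq R]
    [CommRing R'] [IsDomain R'] [Fintype ι] [DecidableEq ι] {ψ : AddChar R R'}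
    (hψ : ψ.IsPrimitive) (w : ι → R) :
    ∑ v : ι → R, ψ (w ⬝ᵥ v) = if w = 0 then (Fintype.card R : R') ^ Fintype.card ι else 0 := by
  calc ∑ v : ι → R, ψ (w ⬝ᵥ v) = ∑ v : ι → R, ∏ i, ψ (v i * w i) := by
        simp only [dotProduct, map_sum_eq_prod, mul_comm]
    _ = ∏ i, ∑ c, ψ (c * w i) := (Fintype.prod_sum fun i c => ψ (c * w i)).symm
    _ = ∏ i, if w i = 0 then (Fintype.card R : R') else 0 := by
        simp only [sum_mulShift _ hψ, apply_ite (Nat.cast : ℕ → R'), Nat.cast_zero]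
    _ = _ := by
        rw [Fintype.prod_ite_zero]
        simp [funext_iff, prod_const, card_univ]

end AddChar

lemma tsum_subtype_eq_add_tsum_subtype_ne {β E : Type*} [NormedAddCommGroup E] [CompleteSpace E]
    {P : β → Prop} {g : β → E} (hg : Summable g) {a : β} (ha : P a) :
    ∑' b : {b // P b}, g b = g a + ∑' b : {b // P b ∧ b ≠ a}, g b := by
  classical
  calc ∑' b : {b // P b}, g b = ∑' b, {b | P b}.indicator g b := tsum_subtype {b | P b} g
    _ = g a + ∑' b, if b = a then 0 else {b | P b}.indicator g b := by
        rw [(hg.indicator _).tsum_eq_add_tsum_ite a,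
          Set.indicator_of_mem (show a ∈ {b | P b} from ha)]
    _ = g a + ∑' b, {b | P b ∧ b ≠ a}.indicator g b := by
        congr 1
        exact tsum_congr fun b => by by_cases hb : b = a <;> simp [Set.indicator_apply, hb]
    _ = _ := by rw [← _root_.tsum_subtype]; rfl

section Walsh

variable {p s m : ℕ}

lemma omega_pow_eq_stdAddChar [NeZero p] (n : ℕ) :
    omega p ^ n = ZMod.stdAddChar (n : ZMod p) := by
  rw [ZMod.stdAddChar_apply, ZMod.toCircle_natCast, omega, ← Complex.exp_nat_mul]
  ring_nf

lemma wal_eq_stdAddChar [NeZero p] (k : ℕ) (x : ℝ) :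
    wal p k x =
      ZMod.stdAddChar (((∑ i ∈ range (k + 1), xdigit p x (i + 1) * ndigit p k i : ℕ)) : ZMod p) :=
  omega_pow_eq_stdAddChar _

lemma norm_walS [NeZero p] (k : Fin s → ℕ) (x : Fin s → ℝ) : ‖walS p s k x‖ = 1 := by
  simp [walS, wal_eq_stdAddChar, norm_prod]

lemma xdigit_natCast_div_pow [NeZero p] (A : ℕ) {r : ℕ} (hr : r ≤ m) :
    xdigit p ((A : ℝ) / p ^ m) r = ndigit p A (m - r) := by
  have hp : (p : ℝ) ≠ 0 := NeZero.ne _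
  have hscale : (p : ℝ) ^ r * (A / p ^ m) = A / ((p ^ (m - r) : ℕ) : ℝ) := by
    rw [← pow_sub_mul_pow (p : ℝ) hr]
    push_cast
    field_simp
  rw [xdigit, hscale, Int.floor_toNat, Nat.floor_div_natCast, Nat.floor_natCast, ndigit]

lemma xdigit_natCast_div_pow_of_lt [NeZero p] (A : ℕ) {r : ℕ} (hr : m < r) :
    xdigit p ((A : ℝ) / p ^ m) r = 0 := by
  have hp : (p : ℝ) ≠ 0 := NeZero.ne _
  have hscale : (p : ℝ) ^ r * (A / p ^ m) = ((A * p ^ (r - m) : ℕ) : ℝ) := by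
    rw [← pow_sub_mul_pow (p : ℝ) hr.le]
    push_cast
    field_simp
  rw [xdigit, hscale, Int.floor_natCast, Int.toNat_natCast]
  exact Nat.mod_eq_zero_of_dvd (dvd_mul_of_dvd_right (dvd_pow_self p (by omega)) A)

def revDigits [NeZero p] (y : Fin m → ZMod p) : Fin m → Fin p :=
  fun i => ⟨(y i.rev).val, ZMod.val_lt _⟩

lemma sum_val_div_pow_eq [NeZero p] (y : Fin m → ZMod p) :
    ∑ i : Fin m, ((y i).val : ℝ) / (p : ℝ) ^ (i.val + 1) =
      (finFunctionFinEquiv (revDigits y) : ℕ) / (p : ℝ) ^ m := by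
  have hp : (p : ℝ) ≠ 0 := NeZero.ne _
  rw [finFunctionFinEquiv_apply, Nat.cast_sum, sum_div]
  refine Fintype.sum_equiv Fin.revPerm _ _ fun i => ?_
  have hpow : (p : ℝ) ^ m = p ^ (i.rev : ℕ) * p ^ (i.val + 1) := by
    rw [← pow_add, Fin.val_rev]
    congr 1
    omega
  simp only [Fin.revPerm_apply, revDigits, Fin.rev_rev, Nat.cast_mul, Nat.cast_pow]
  rw [hpow]
  field_simp

lemma xdigit_sum_val_div_pow [NeZero p] (y : Fin m → ZMod p) (i : Fin m) :
    xdigit p (∑ j : Fin m, ((y j).val : ℝ) / (p : ℝ) ^ (j.val + 1)) (i + 1) = (y i).val := by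
  rw [sum_val_div_pow_eq, xdigit_natCast_div_pow _ i.is_lt,
    show m - (i + 1) = i.rev by simp [Fin.val_rev], ndigit_finFunctionFinEquiv]
  simp [revDigits]

lemma xdigit_sum_val_div_pow_of_lt [NeZero p] (y : Fin m → ZMod p) {r : ℕ} (hr : m < r) :
    xdigit p (∑ j : Fin m, ((y j).val : ℝ) / (p : ℝ) ^ (j.val + 1)) r = 0 := by
  rw [sum_val_div_pow_eq, xdigit_natCast_div_pow_of_lt _ hr]

lemma wal_sum_val_div_pow [Fact (1 < p)] (k : ℕ) (y : Fin m → ZMod p) :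
    wal p k (∑ j : Fin m, ((y j).val : ℝ) / (p : ℝ) ^ (j.val + 1)) =
      ZMod.stdAddChar (nvec p m k ⬝ᵥ y) := by
  set x := ∑ j : Fin m, ((y j).val : ℝ) / (p : ℝ) ^ (j.val + 1)
  have hdigit : ∀ i : Fin m, xdigit p x (i + 1) = (y i).val := xdigit_sum_val_div_pow y
  have hvanish : ∀ i ≥ min (k + 1) m, xdigit p x (i + 1) * ndigit p k i = 0 := fun i hi => by
    rcases le_or_gt m i with him | hik
    · rw [xdigit_sum_val_div_pow_of_lt y (by omega), zero_mul]
    · rw [ndigit_eq_zero_of_lt (by omega), mul_zero]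
  rw [wal_eq_stdAddChar, eventually_constant_sum hvanish (min_le_left _ _),
    ← eventually_constant_sum hvanish (min_le_right _ _), ← Fin.sum_univ_eq_sum_range]
  simp only [hdigit, dotProduct, nvec, Nat.cast_sum, Nat.cast_mul, ZMod.natCast_zmod_val,
    mul_comm]

lemma walS_netPoint [Fact (1 < p)] (C : Fin s → Matrix (Fin m) (Fin m) (ZMod p))
    (k : Fin s → ℕ) (n : ℕ) :
    walS p s k (netPoint p s m C n) = ZMod.stdAddChar (Cdot p s m C k ⬝ᵥ nvec p m n) := by
  simp only [walS, netPoint, wal_sum_val_div_pow, ← AddChar.map_sum_eq_prod, Cdot,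
    sum_dotProduct, Matrix.dotProduct_mulVec, Matrix.mulVec_transpose]

end Walsh

section NetSums

variable {p s m : ℕ}

lemma nvec_injective [NeZero p] : Function.Injective fun n : Fin (p ^ m) => nvec p m n := by
  have hcast : Function.Injective fun j : Fin p => ((j : ℕ) : ZMod p) := fun a b h =>
    Fin.ext <| by simpa [ZMod.val_natCast_of_lt a.is_lt, ZMod.val_natCast_of_lt b.is_lt]
      using congrArg ZMod.val h
  have hnvec : (fun n : Fin (p ^ m) => nvec p m n) =
      (fun f i => ((f i : ℕ) : ZMod p)) ∘ finFunctionFinEquiv.symm := by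
    ext n i
    simp [nvec, ndigit, finFunctionFinEquiv_symm_apply_val]
  rw [hnvec]
  exact hcast.comp_left.comp finFunctionFinEquiv.symm.injective

lemma sum_range_nvec [NeZero p] {M : Type*} [AddCommMonoid M] (F : (Fin m → ZMod p) → M) :
    ∑ n ∈ range (p ^ m), F (nvec p m n) = ∑ v, F v := by
  have hbij : Function.Bijective fun n : Fin (p ^ m) => nvec p m n :=
    (Fintype.bijective_iff_injective_and_card _).2 ⟨nvec_injective, by simp [ZMod.card]⟩
  rw [← Fin.sum_univ_eq_sum_range (fun n => F (nvec p m n))]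
  exact hbij.sum_comp F

lemma sum_walS_netPoint_mul_conj [Fact (1 < p)] (C : Fin s → Matrix (Fin m) (Fin m) (ZMod p))
    (k l : Fin s → ℕ) :
    ∑ n ∈ range (p ^ m),
        walS p s l (netPoint p s m C n) * starRingEnd ℂ (walS p s k (netPoint p s m C n)) =
      if Cdot p s m C l = Cdot p s m C k then (p : ℂ) ^ m else 0 := by
  simp only [walS_netPoint, ← AddChar.map_neg_eq_conj, ← AddChar.map_add_eq_mul,
    ← neg_dotProduct, ← add_dotProduct, ← sub_eq_add_neg]
  rw [sum_range_nvec fun v => ZMod.stdAddChar ((Cdot p s m C l - Cdot p s m C k) ⬝ᵥ v),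
    AddChar.sum_dotProduct_eq_ite (ZMod.isPrimitive_stdAddChar p)]
  simp [sub_eq_zero, ZMod.card]

end NetSums

lemma sum_walshSeries_netPoint_mul_conj {p s m : ℕ} [Fact (1 < p)]
    (C : Fin s → Matrix (Fin m) (Fin m) (ZMod p)) {fhat : (Fin s → ℕ) → ℂ}
    (hsum : Summable fun l => ‖fhat l‖) (k : Fin s → ℕ) :
    ∑ n ∈ range (p ^ m), (∑' l, fhat l * walS p s l (netPoint p s m C n)) *
        starRingEnd ℂ (walS p s k (netPoint p s m C n)) =
      (p : ℂ) ^ m * ∑' l : {l // Cdot p s m C l = Cdot p s m C k}, fhat l := by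
  set X := netPoint p s m C
  set D := {l | Cdot p s m C l = Cdot p s m C k}
  have hterm : ∀ n, Summable fun l =>
      fhat l * (walS p s l (X n) * starRingEnd ℂ (walS p s k (X n))) := fun n =>
    hsum.of_norm_bounded fun l => by simp [norm_walS]
  calc _ = ∑ n ∈ range (p ^ m),
        ∑' l, fhat l * (walS p s l (X n) * starRingEnd ℂ (walS p s k (X n))) := by
        simp only [← tsum_mul_right, mul_assoc]
    _ = ∑' l, fhat l *
          ∑ n ∈ range (p ^ m), walS p s l (X n) * starRingEnd ℂ (walS p s k (X n)) := by
        rw [← Summable.tsum_finsetSum fun n _ => hterm n]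
        simp only [mul_sum]
    _ = ∑' l, D.indicator (fun l => (p : ℂ) ^ m * fhat l) l := by
        simp only [X, D, sum_walS_netPoint_mul_conj, Set.indicator_apply, Set.mem_ofPred_eq, mul_ite,
          mul_zero, mul_comm]
    _ = _ := by rw [← _root_.tsum_subtype, tsum_mul_left]; rfl

theorem statement6_general (p s m : ℕ) [Fact p.Prime]
    (C : Fin s → Matrix (Fin m) (Fin m) (ZMod p))
    (fhat : (Fin s → ℕ) → ℂ) (hsum : Summable fun l : Fin s → ℕ => ‖fhat l‖)
    (f : (Fin s → ℝ) → ℂ)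
    (hf : ∀ x : Fin s → ℝ, f x = ∑' l : Fin s → ℕ, fhat l * walS p s l x)
    (k : Fin s → ℕ) :
    ((p : ℂ) ^ m)⁻¹ * ∑ n ∈ Finset.range (p ^ m),
        f (netPoint p s m C n) * (starRingEnd ℂ) (walS p s k (netPoint p s m C n)) =
      ∑' l : {l : Fin s → ℕ // Cdot p s m C l = 0}, fhat (fun j => dadd p (k j) (l.1 j)) ∧
    (∑' l : {l : Fin s → ℕ // Cdot p s m C l = 0}, fhat (fun j => dadd p (k j) (l.1 j))) =
      fhat k + ∑' l : {l : Fin s → ℕ // Cdot p s m C l = 0 ∧ l ≠ 0},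
        fhat (fun j => dadd p (k j) (l.1 j)) := by
  have hpm : (p : ℂ) ^ m ≠ 0 := pow_ne_zero _ (Nat.cast_ne_zero.2 (NeZero.ne p))
  let shiftByK : (Fin s → ℕ) ≃ (Fin s → ℕ) := Equiv.piCongrRight fun j => daddEquiv p (k j)
  have hdual : ∀ l, Cdot p s m C l = 0 ↔ Cdot p s m C (shiftByK l) = Cdot p s m C k := fun l =>
    (Cdot_dadd C k l ▸ add_eq_left).symm
  refine ⟨?_, ?_⟩
  · rw [funext hf, sum_walshSeries_netPoint_mul_conj C hsum k, inv_mul_cancel_left₀ hpm]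
    exact ((shiftByK.subtypeEquiv hdual).tsum_eq fun l => fhat l.1).symm
  · have hshifted : Summable fun l : Fin s → ℕ => fhat fun j => dadd p (k j) (l j) :=
      hsum.of_norm.comp_injective shiftByK.injective
    rw [tsum_subtype_eq_add_tsum_subtype_ne (P := fun l => Cdot p s m C l = 0) hshifted
      (Cdot_zero C)]
    simp only [Pi.zero_apply, dadd_zero_right]

/-- aliasing formula for the discrete Walsh coefficients. -/
theorem statement6 (p s m : ℕ) [Fact p.Prime] (hs : 1 ≤ s) (hm : 1 ≤ m)
    (C : Fin s → Matrix (Fin m) (Fin m) (ZMod p))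
    (fhat : (Fin s → ℕ) → ℂ) (hsum : Summable fun l : Fin s → ℕ => ‖fhat l‖)
    (f : (Fin s → ℝ) → ℂ)
    (hf : ∀ x : Fin s → ℝ, f x = ∑' l : Fin s → ℕ, fhat l * walS p s l x)
    (k : Fin s → ℕ) :
    ((p : ℂ) ^ m)⁻¹ * ∑ n ∈ Finset.range (p ^ m),
        f (netPoint p s m C n) * (starRingEnd ℂ) (walS p s k (netPoint p s m C n)) =
      ∑' l : {l : Fin s → ℕ // Cdot p s m C l = 0}, fhat (fun j => dadd p (k j) (l.1 j)) ∧
    (∑' l : {l : Fin s → ℕ // Cdot p s m C l = 0}, fhat (fun j => dadd p (k j) (l.1 j))) =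
      fhat k + ∑' l : {l : Fin s → ℕ // Cdot p s m C l = 0 ∧ l ≠ 0},
        fhat (fun j => dadd p (k j) (l.1 j)) :=
  statement6_general p s m C fhat hsum f hf k
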